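/- arXiv:2211.02836 — 2 statements merged into one kernel-verified Lean document; each statement's English description precedes it below -/
import Mathlib

section
/- For a quaternion tensor A under the T-product, A† = (A^H*A)†*A^H = A^H*(A*A^H)†. -/
open scoped Quaternion BigOperators

noncomputable section

/-- A quaternion third-order tensor in `H^{n1 x n2 x n3}`, with the third
(circulant) index taken mod `n3`. -/
abbrev QT (n1 n2 n3 : ℕ) := Fin n1 → Fin n2 → ZMod n3 → ℍ[ℝ]

/-- The T-product of two quaternion tensors (circular convolution along the third mode). -/
def tmul {n1 n2 l n3 : ℕ} [NeZero n3] (A : QT n1 n2 n3) (B : QT n2 l n3) : QT n1 l n3 :=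
  fun i j k => ∑ p : Fin n2, ∑ m : ZMod n3, A i p m * B p j (k - m)

/-- The identity tensor: first frontal slice is the identity matrix, others zero. -/
def tid (n n3 : ℕ) : QT n n n3 := fun i j k => if i = j ∧ k = 0 then 1 else 0

/-- Conjugate transpose: conjugate-transpose each frontal slice and
reverse the order of slices 2 through n3. -/
def hconj {n1 n2 n3 : ℕ} (A : QT n1 n2 n3) : QT n2 n1 n3 :=
  fun j i k => star (A i j (-k))

/-- The four Penrose equations for the T-product. -/
def IsMP {n1 n2 n3 : ℕ} [NeZero n3] (A : QT n1 n2 n3) (X : QT n2 n1 n3) : Prop :=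
  tmul (tmul A X) A = A ∧ tmul (tmul X A) X = X ∧
    hconj (tmul A X) = tmul A X ∧ hconj (tmul X A) = tmul X A

lemma sum_swap4 {M : Type*} [AddCommMonoid M] {α β γ δ : Type*} [Fintype α] [Fintype β] [Fintype γ] [Fintype δ]
    (f : α → β → γ → δ → M) :
    ∑ a, ∑ b, ∑ c, ∑ d, f a b c d = ∑ c, ∑ d, ∑ a, ∑ b, f a b c d := by
  trans ∑ a, ∑ c, ∑ b, ∑ d, f a b c d
  · exact Finset.sum_congr rfl fun a _ => Finset.sum_comm
  trans ∑ c, ∑ a, ∑ b, ∑ d, f a b c d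
  · exact Finset.sum_comm
  refine Finset.sum_congr rfl fun c _ => ?_
  trans ∑ a, ∑ d, ∑ b, f a b c d
  · exact Finset.sum_congr rfl fun a _ => Finset.sum_comm
  · exact Finset.sum_comm

section
variable {n1 n2 n3 l l2 : ℕ} [NeZero n3]

lemma tmul_assoc (A : QT n1 n2 n3) (B : QT n2 l n3) (C : QT l l2 n3) :
    tmul (tmul A B) C = tmul A (tmul B C) := by
  funext i j k
  simp only [tmul, Finset.sum_mul, Finset.mul_sum]
  rw [sum_swap4 (fun q m p r => A i p r * B p q (m - r) * C q j (k - m))]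
  refine Finset.sum_congr rfl fun p _ => Finset.sum_congr rfl fun r _ =>
    Finset.sum_congr rfl fun q _ => ?_
  refine (Fintype.sum_equiv (Equiv.addRight r) _ _ fun s => ?_).symm
  simp only [Equiv.coe_addRight, add_sub_cancel_right]
  rw [show k - (s + r) = k - r - s by ring, mul_assoc]

omit [NeZero n3] in
lemma hconj_hconj (A : QT n1 n2 n3) : hconj (hconj A) = A := by
  funext i j k; simp [hconj]

omit [NeZero n3] in
lemma hconj_zero : hconj (0 : QT n1 n2 n3) = 0 := by
  funext i j k; simp [hconj]

lemma hconj_tmul (A : QT n1 n2 n3) (B : QT n2 l n3) :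
    hconj (tmul A B) = tmul (hconj B) (hconj A) := by
  funext j i k
  simp only [hconj, tmul, star_sum, star_mul]
  refine Finset.sum_congr rfl fun p _ => ?_
  refine Fintype.sum_equiv (Equiv.addLeft k) _ _ fun m => ?_
  simp only [Equiv.coe_addLeft]
  congr 2 <;> ring_nf

omit [NeZero n3] in
lemma hconj_sub (A B : QT n1 n2 n3) : hconj (A - B) = hconj A - hconj B := by
  funext i j k; simp [hconj]

lemma tmul_sub (A : QT n1 n2 n3) (B C : QT n2 l n3) :
    tmul A (B - C) = tmul A B - tmul A C := by
  funext i j k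
  simp [tmul, mul_sub, Finset.sum_sub_distrib]

lemma sub_tmul (A B : QT n1 n2 n3) (C : QT n2 l n3) :
    tmul (A - B) C = tmul A C - tmul B C := by
  funext i j k
  simp [tmul, sub_mul, Finset.sum_sub_distrib]

lemma eq_zero_of_hconj_tmul (N : QT n1 n2 n3) (h : tmul (hconj N) N = 0) : N = 0 := by
  funext p i m
  have h0 := congrFun (congrFun (congrFun h i) i) 0
  simp only [tmul, hconj, Pi.zero_apply] at h0
  have : ∀ q : Fin n1, ∀ r : ZMod n3, star (N q i (-r)) * N q i (0 - r) = ((Quaternion.normSq (N q i (-r)) : ℝ) : ℍ[ℝ]) := by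
    intro q r
    rw [zero_sub, Quaternion.star_mul_self]
  simp only [this] at h0
  simp only [← Quaternion.algebraMap_def] at h0
  simp only [← map_sum] at h0
  have h1 : ∑ q : Fin n1, ∑ r : ZMod n3, Quaternion.normSq (N q i (-r)) = 0 := by
    exact (map_eq_zero_iff (algebraMap ℝ ℍ[ℝ]) ((algebraMap ℝ ℍ[ℝ]).injective)).mp h0
  have h2 : ∀ q ∈ (Finset.univ : Finset (Fin n1)), ∀ r ∈ (Finset.univ : Finset (ZMod n3)),
      Quaternion.normSq (N q i (-r)) = 0 := by
    have hnn : ∀ q ∈ (Finset.univ : Finset (Fin n1)),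
        0 ≤ ∑ r : ZMod n3, Quaternion.normSq (N q i (-r)) :=
      fun q _ => Finset.sum_nonneg fun r _ => Quaternion.normSq_nonneg
    intro q hq r hr
    have hq0 : ∑ r : ZMod n3, Quaternion.normSq (N q i (-r)) = 0 :=
      (Finset.sum_eq_zero_iff_of_nonneg hnn).mp h1 q hq
    exact (Finset.sum_eq_zero_iff_of_nonneg
      (fun r _ => Quaternion.normSq_nonneg)).mp hq0 r hr
  have h3 := h2 p (Finset.mem_univ p) (-m) (Finset.mem_univ (-m))
  rw [neg_neg] at h3
  simpa using Quaternion.normSq_eq_zero.mp h3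

lemma mp_unique (A : QT n1 n2 n3) (X W : QT n2 n1 n3) (hX : IsMP A X) (hW : IsMP A W) :
    X = W := by
  obtain ⟨hX1, hX2, hX3, hX4⟩ := hX
  obtain ⟨hW1, hW2, hW3, hW4⟩ := hW
  have hAX : tmul A X = tmul A W := by
    conv_lhs => rw [← hX3]
    calc hconj (tmul A X)
        = tmul (hconj X) (hconj A) := by rw [hconj_tmul]
      _ = tmul (hconj X) (hconj (tmul (tmul A W) A)) := by rw [hW1]
      _ = tmul (hconj X) (tmul (hconj A) (tmul A W)) := by
            rw [hconj_tmul]; rw [hW3]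
      _ = tmul (tmul (hconj X) (hconj A)) (tmul A W) := (tmul_assoc _ _ _).symm
      _ = tmul (hconj (tmul A X)) (tmul A W) := by rw [← hconj_tmul]
      _ = tmul (tmul A X) (tmul A W) := by rw [hX3]
      _ = tmul (tmul (tmul A X) A) W := (tmul_assoc _ _ _).symm
      _ = tmul A W := by rw [hX1]
  have hXA : tmul X A = tmul W A := by
    have hW1' : tmul A (tmul W A) = A := by rw [← tmul_assoc]; exact hW1
    conv_lhs => rw [← hX4]
    calc hconj (tmul X A)
        = tmul (hconj A) (hconj X) := by rw [hconj_tmul]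
      _ = tmul (hconj (tmul A (tmul W A))) (hconj X) := by rw [hW1']
      _ = tmul (tmul (hconj (tmul W A)) (hconj A)) (hconj X) := by rw [hconj_tmul]
      _ = tmul (tmul (tmul W A) (hconj A)) (hconj X) := by rw [hW4]
      _ = tmul (tmul W A) (tmul (hconj A) (hconj X)) := tmul_assoc _ _ _
      _ = tmul (tmul W A) (hconj (tmul X A)) := by rw [← hconj_tmul]
      _ = tmul (tmul W A) (tmul X A) := by rw [hX4]
      _ = tmul W (tmul A (tmul X A)) := tmul_assoc _ _ _
      _ = tmul W (tmul (tmul A X) A) := by rw [tmul_assoc A X A]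
      _ = tmul W A := by rw [hX1]
  calc X = tmul (tmul X A) X := hX2.symm
    _ = tmul (tmul W A) X := by rw [hXA]
    _ = tmul W (tmul A X) := tmul_assoc _ _ _
    _ = tmul W (tmul A W) := by rw [hAX]
    _ = tmul (tmul W A) W := (tmul_assoc _ _ _).symm
    _ = W := hW2

lemma mp_left (A : QT n1 n2 n3) (Y : QT n2 n2 n3) (hY : IsMP (tmul (hconj A) A) Y) :
    IsMP A (tmul Y (hconj A)) := by
  obtain ⟨hY1, hY2, hY3, hY4⟩ := hY
  have hY2p : ∀ {l'} (Q : QT n2 l' n3),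
      tmul Y (tmul (hconj A) (tmul A (tmul Y Q))) = tmul Y Q := by
    intro _ Q
    calc tmul Y (tmul (hconj A) (tmul A (tmul Y Q)))
        = tmul (tmul (tmul Y (tmul (hconj A) A)) Y) Q := by simp only [tmul_assoc]
      _ = tmul Y Q := by rw [hY2]
  have hY4p : ∀ {l'} (Q : QT n2 l' n3),
      tmul (hconj A) (tmul A (tmul (hconj Y) Q)) = tmul Y (tmul (hconj A) (tmul A Q)) := by
    intro _ Q
    calc tmul (hconj A) (tmul A (tmul (hconj Y) Q))
        = tmul (hconj (tmul Y (tmul (hconj A) A))) Q := by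
          simp only [hconj_tmul, hconj_hconj, tmul_assoc]
      _ = tmul (tmul Y (tmul (hconj A) A)) Q := by rw [hY4]
      _ = tmul Y (tmul (hconj A) (tmul A Q)) := by simp only [tmul_assoc]
  have hY1n : tmul (hconj A) (tmul A (tmul Y (tmul (hconj A) A))) = tmul (hconj A) A := by
    calc tmul (hconj A) (tmul A (tmul Y (tmul (hconj A) A)))
        = tmul (tmul (tmul (hconj A) A) Y) (tmul (hconj A) A) := by simp only [tmul_assoc]
      _ = tmul (hconj A) A := hY1
  have key1 : tmul A (tmul Y (tmul (hconj A) A)) = A := by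
    have hMM : tmul (hconj (tmul A (tmul Y (tmul (hconj A) A)))) (tmul A (tmul Y (tmul (hconj A) A)))
        = tmul Y (tmul (hconj A) (tmul A (tmul (hconj A) A))) := by
      simp only [hconj_tmul, hconj_hconj, tmul_assoc]
      rw [hY1n, hY4p]
    have hMA : tmul (hconj (tmul A (tmul Y (tmul (hconj A) A)))) A
        = tmul Y (tmul (hconj A) (tmul A (tmul (hconj A) A))) := by
      simp only [hconj_tmul, hconj_hconj, tmul_assoc]
      rw [hY4p]
    have h0 : tmul (hconj (tmul A (tmul Y (tmul (hconj A) A)) - A))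
        (tmul A (tmul Y (tmul (hconj A) A)) - A) = 0 := by
      rw [hconj_sub, sub_tmul, tmul_sub, tmul_sub, hMM, hMA, hY1n]
      simp
    exact sub_eq_zero.mp (eq_zero_of_hconj_tmul _ h0)
  have key1p : ∀ {l'} (Q : QT n2 l' n3),
      tmul A (tmul Y (tmul (hconj A) (tmul A Q))) = tmul A Q := by
    intro _ Q
    calc tmul A (tmul Y (tmul (hconj A) (tmul A Q)))
        = tmul (tmul A (tmul Y (tmul (hconj A) A))) Q := by simp only [tmul_assoc]
      _ = tmul A Q := by rw [key1]
  have hAH := congrArg hconj key1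
  simp only [hconj_tmul, hconj_hconj, tmul_assoc] at hAH
  refine ⟨?_, ?_, ?_, ?_⟩
  · calc tmul (tmul A (tmul Y (hconj A))) A
        = tmul A (tmul Y (tmul (hconj A) A)) := by simp only [tmul_assoc]
      _ = A := key1
  · calc tmul (tmul (tmul Y (hconj A)) A) (tmul Y (hconj A))
        = tmul Y (tmul (hconj A) (tmul A (tmul Y (hconj A)))) := by simp only [tmul_assoc]
      _ = tmul Y (hconj A) := hY2p _
  · calc hconj (tmul A (tmul Y (hconj A)))
        = tmul A (tmul (hconj Y) (hconj A)) := by simp only [hconj_tmul, hconj_hconj, tmul_assoc]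
      _ = tmul A (tmul Y (hconj A)) := by
          conv_rhs => rw [← hAH]; rw [key1p]
  · calc hconj (tmul (tmul Y (hconj A)) A)
        = hconj (tmul Y (tmul (hconj A) A)) := by rw [tmul_assoc]
      _ = tmul Y (tmul (hconj A) A) := hY4
      _ = tmul (tmul Y (hconj A)) A := (tmul_assoc _ _ _).symm

lemma mp_right (A : QT n1 n2 n3) (Z : QT n1 n1 n3) (hZ : IsMP (tmul A (hconj A)) Z) :
    IsMP A (tmul (hconj A) Z) := by
  obtain ⟨hZ1, hZ2, hZ3, hZ4⟩ := hZ
  have hZ4p : ∀ {l'} (Q : QT n1 l' n3),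
      tmul A (tmul (hconj A) (tmul (hconj Z) Q)) = tmul Z (tmul A (tmul (hconj A) Q)) := by
    intro _ Q
    calc tmul A (tmul (hconj A) (tmul (hconj Z) Q))
        = tmul (hconj (tmul Z (tmul A (hconj A)))) Q := by
          simp only [hconj_tmul, hconj_hconj, tmul_assoc]
      _ = tmul (tmul Z (tmul A (hconj A))) Q := by rw [hZ4]
      _ = tmul Z (tmul A (tmul (hconj A) Q)) := by simp only [tmul_assoc]
  have hZ1p : ∀ {l'} (Q : QT n1 l' n3),
      tmul A (tmul (hconj A) (tmul Z (tmul A (tmul (hconj A) Q)))) = tmul A (tmul (hconj A) Q) := by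
    intro _ Q
    calc tmul A (tmul (hconj A) (tmul Z (tmul A (tmul (hconj A) Q))))
        = tmul (tmul (tmul (tmul A (hconj A)) Z) (tmul A (hconj A))) Q := by
          simp only [tmul_assoc]
      _ = tmul (tmul A (hconj A)) Q := by rw [hZ1]
      _ = tmul A (tmul (hconj A) Q) := by simp only [tmul_assoc]
  have hZ1n : tmul A (tmul (hconj A) (tmul Z (tmul A (hconj A)))) = tmul A (hconj A) := by
    calc tmul A (tmul (hconj A) (tmul Z (tmul A (hconj A))))
        = tmul (tmul (tmul A (hconj A)) Z) (tmul A (hconj A)) := by simp only [tmul_assoc]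
      _ = tmul A (hconj A) := hZ1
  have hZ2n : tmul Z (tmul A (tmul (hconj A) Z)) = Z := by
    calc tmul Z (tmul A (tmul (hconj A) Z))
        = tmul (tmul Z (tmul A (hconj A))) Z := by simp only [tmul_assoc]
      _ = Z := hZ2
  have key2 : tmul A (tmul (hconj A) (tmul Z A)) = A := by
    have hMM : tmul (tmul A (tmul (hconj A) (tmul Z A))) (hconj (tmul A (tmul (hconj A) (tmul Z A))))
        = tmul Z (tmul A (tmul (hconj A) (tmul A (hconj A)))) := by
      simp only [hconj_tmul, hconj_hconj, tmul_assoc]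
      rw [hZ1p, hZ4p]
    have hMA : tmul (tmul A (tmul (hconj A) (tmul Z A))) (hconj A) = tmul A (hconj A) := by
      simp only [tmul_assoc]
      exact hZ1n
    have hAM : tmul A (hconj (tmul A (tmul (hconj A) (tmul Z A))))
        = tmul Z (tmul A (tmul (hconj A) (tmul A (hconj A)))) := by
      simp only [hconj_tmul, hconj_hconj, tmul_assoc]
      rw [hZ4p]
    have h0 : tmul (tmul A (tmul (hconj A) (tmul Z A)) - A)
        (hconj (tmul A (tmul (hconj A) (tmul Z A)) - A)) = 0 := by
      rw [hconj_sub, tmul_sub, sub_tmul, sub_tmul, hMM, hMA, hAM]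
      simp
    have h1 : hconj (tmul A (tmul (hconj A) (tmul Z A)) - A) = 0 := by
      refine eq_zero_of_hconj_tmul _ ?_
      rw [hconj_hconj]; exact h0
    have h2 : tmul A (tmul (hconj A) (tmul Z A)) - A = 0 := by
      rw [← hconj_hconj (tmul A (tmul (hconj A) (tmul Z A)) - A), h1, hconj_zero]
    exact sub_eq_zero.mp h2
  have hAH2 := congrArg hconj key2
  simp only [hconj_tmul, hconj_hconj, tmul_assoc] at hAH2
  refine ⟨?_, ?_, ?_, ?_⟩
  · calc tmul (tmul A (tmul (hconj A) Z)) A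
        = tmul A (tmul (hconj A) (tmul Z A)) := by simp only [tmul_assoc]
      _ = A := key2
  · calc tmul (tmul (tmul (hconj A) Z) A) (tmul (hconj A) Z)
        = tmul (hconj A) (tmul Z (tmul A (tmul (hconj A) Z))) := by simp only [tmul_assoc]
      _ = tmul (hconj A) Z := by rw [hZ2n]
  · calc hconj (tmul A (tmul (hconj A) Z))
        = hconj (tmul (tmul A (hconj A)) Z) := by rw [tmul_assoc]
      _ = tmul (tmul A (hconj A)) Z := hZ3
      _ = tmul A (tmul (hconj A) Z) := tmul_assoc _ _ _
  · calc hconj (tmul (tmul (hconj A) Z) A)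
        = tmul (hconj A) (tmul (hconj Z) A) := by simp only [hconj_tmul, hconj_hconj, tmul_assoc]
      _ = tmul (tmul (hconj A) Z) A := by
          conv_rhs =>
            rw [show tmul (tmul (hconj A) Z) A = tmul (hconj A) (tmul Z A) from tmul_assoc _ _ _,
              ← hAH2]
            simp only [tmul_assoc]
            rw [key2]

end

theorem mp_eq_mp_mul_hconj {n1 n2 n3 : ℕ} [NeZero n3]
    (A : QT n1 n2 n3) (X : QT n2 n1 n3) (Y : QT n2 n2 n3) (Z : QT n1 n1 n3)
    (hX : IsMP A X) (hY : IsMP (tmul (hconj A) A) Y) (hZ : IsMP (tmul A (hconj A)) Z) :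
    X = tmul Y (hconj A) ∧ X = tmul (hconj A) Z := by
  exact ⟨mp_unique A X _ hX (mp_left A Y hY), mp_unique A X _ hX (mp_right A Z hZ)⟩
end
end

section
/- Given an inner inverse A^(1) of a quaternion tensor A, the set of all inner inverses of A equals { A^(1) + Z − A^(1)*A*Z*A*A^(1) : Z arbitrary of appropriate size }. -/
open scoped Quaternion BigOperators

noncomputable section

lemma tmul_assoc_s13 {a b c d N : ℕ} [NeZero N] (A : QT a b N) (B : QT b c N) (C : QT c d N) :
    tmul (tmul A B) C = tmul A (tmul B C) := by
  funext i j k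
  simp only [tmul, Finset.sum_mul, Finset.mul_sum, mul_assoc]
  calc ∑ q : Fin c, ∑ n : ZMod N, ∑ p : Fin b, ∑ m : ZMod N,
        A i p m * (B p q (n - m) * C q j (k - n))
      = ∑ n : ZMod N, ∑ q : Fin c, ∑ p : Fin b, ∑ m : ZMod N,
        A i p m * (B p q (n - m) * C q j (k - n)) := Finset.sum_comm
    _ = ∑ n : ZMod N, ∑ p : Fin b, ∑ q : Fin c, ∑ m : ZMod N,
        A i p m * (B p q (n - m) * C q j (k - n)) :=
        Finset.sum_congr rfl fun n _ => Finset.sum_comm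
    _ = ∑ p : Fin b, ∑ n : ZMod N, ∑ q : Fin c, ∑ m : ZMod N,
        A i p m * (B p q (n - m) * C q j (k - n)) := Finset.sum_comm
    _ = ∑ p : Fin b, ∑ n : ZMod N, ∑ m : ZMod N, ∑ q : Fin c,
        A i p m * (B p q (n - m) * C q j (k - n)) :=
        Finset.sum_congr rfl fun p _ => Finset.sum_congr rfl fun n _ => Finset.sum_comm
    _ = ∑ p : Fin b, ∑ m : ZMod N, ∑ n : ZMod N, ∑ q : Fin c,
        A i p m * (B p q (n - m) * C q j (k - n)) :=
        Finset.sum_congr rfl fun p _ => Finset.sum_comm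
    _ = ∑ p : Fin b, ∑ m : ZMod N, ∑ q : Fin c, ∑ n : ZMod N,
        A i p m * (B p q (n - m) * C q j (k - n)) :=
        Finset.sum_congr rfl fun p _ => Finset.sum_congr rfl fun m _ => Finset.sum_comm
    _ = ∑ p : Fin b, ∑ m : ZMod N, ∑ q : Fin c, ∑ n : ZMod N,
        A i p m * (B p q n * C q j (k - m - n)) := by
        refine Finset.sum_congr rfl fun p _ => Finset.sum_congr rfl fun m _ =>
          Finset.sum_congr rfl fun q _ => ?_
        refine Fintype.sum_equiv (Equiv.subRight m) _ _ fun n => ?_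
        simp [Equiv.subRight, sub_sub_sub_cancel_right]

lemma tmul_add_left {a b N : ℕ} [NeZero N] (A B : QT a b N) {c : ℕ} (C : QT b c N) :
    tmul (A + B) C = tmul A C + tmul B C := by
  funext i j k
  simp [tmul, add_mul, Finset.sum_add_distrib]

lemma tmul_add_right {a b c N : ℕ} [NeZero N] (A : QT a b N) (B C : QT b c N) :
    tmul A (B + C) = tmul A B + tmul A C := by
  funext i j k
  simp [tmul, mul_add, Finset.sum_add_distrib]

lemma tmul_sub_left {a b N : ℕ} [NeZero N] (A B : QT a b N) {c : ℕ} (C : QT b c N) :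
    tmul (A - B) C = tmul A C - tmul B C := by
  funext i j k
  simp [tmul, sub_mul, Finset.sum_sub_distrib]

lemma tmul_sub_right {a b c N : ℕ} [NeZero N] (A : QT a b N) (B C : QT b c N) :
    tmul A (B - C) = tmul A B - tmul A C := by
  funext i j k
  simp [tmul, mul_sub, Finset.sum_sub_distrib]

lemma tmul_zero {a b c N : ℕ} [NeZero N] (A : QT a b N) :
    tmul A (0 : QT b c N) = 0 := by
  funext i j k; simp [tmul]

lemma zero_tmul {a b c N : ℕ} [NeZero N] (A : QT b c N) :
    tmul (0 : QT a b N) A = 0 := by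
  funext i j k; simp [tmul]

theorem inner_inverse_set {n1 n2 n3 : ℕ} [NeZero n3]
    (A : QT n1 n2 n3) (A1 : QT n2 n1 n3) (hA1 : tmul (tmul A A1) A = A) :
    {X : QT n2 n1 n3 | tmul (tmul A X) A = A} =
      {X : QT n2 n1 n3 | ∃ Z : QT n2 n1 n3,
        X = A1 + Z - tmul (tmul (tmul (tmul A1 A) Z) A) A1} := by
  have hA1' : tmul A (tmul A1 A) = A := by rw [← tmul_assoc_s13]; exact hA1
  ext X
  simp only [Set.mem_setOf_eq]
  constructor
  · intro hX
    refine ⟨X - A1, ?_⟩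
    have h0 : tmul (tmul A (X - A1)) A = 0 := by
      rw [tmul_sub_right, tmul_sub_left, hX, hA1, sub_self]
    have hT : tmul (tmul (tmul (tmul A1 A) (X - A1)) A) A1 = 0 := by
      rw [tmul_assoc_s13 A1 A (X - A1), tmul_assoc_s13 A1 (tmul A (X - A1)) A, h0, tmul_zero, zero_tmul]
    rw [hT]
    abel
  · rintro ⟨Z, rfl⟩
    have key : tmul (tmul A (tmul (tmul (tmul (tmul A1 A) Z) A) A1)) A
        = tmul (tmul A Z) A := by
      rw [← tmul_assoc_s13 A _ A1, ← tmul_assoc_s13 A _ A, ← tmul_assoc_s13 A (tmul A1 A) Z, hA1',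
        tmul_assoc_s13 _ A1 A, tmul_assoc_s13 (tmul A Z) A (tmul A1 A), hA1']
    rw [tmul_sub_right, tmul_sub_left, tmul_add_right, tmul_add_left, hA1, key]
    abel
end
end
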